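/- arXiv:1509.04483 — 8 statements merged into one kernel-verified Lean document; each statement's English description precedes it below -/
import Mathlib

section
/- Let I be a zero-dimensional ideal of R = ℂ[x₁,…,xₙ]. A point λ = (λ₁,…,λₙ) ∈ ℂⁿ lies in the zero locus V(I) if and only if there exists a nonzero element v of the quotient ring R/I such that T_i v = λ_i · v for every i = 1,…,n, where T_i is the companion endomorphism of multiplication by x_i. In other words, V(I) is exactly the set of vectors of simultaneous eigenvalues of the commuting family T₁,…,Tₙ (Stickelberger's theorem). -/
/-!
A point `λ ∈ V(I)` gives a character `R ⧸ I → ℂ`, whose kernel is a maximal ideal of the Artinian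
ring `R ⧸ I` and hence an associated prime: some `v ≠ 0` is killed by it, in particular by every
`xᵢ - λᵢ`. Conversely, a common eigenvector `v` satisfies `p • v = p(λ) • v` for every polynomial
`p`, and for `p ∈ I` the left side vanishes.
-/

theorem Ideal.IsMaximal.mem_associatedPrimes_of_isArtinianRing {A : Type*} [CommRing A]
    [IsArtinianRing A] (m : Ideal A) [m.IsMaximal] : m ∈ associatedPrimes A A :=
  have : IsFractionRing A A := IsFractionRing.self_iff_nonZeroDivisors_le_isUnit.mpr
    fun _ ha ↦ IsArtinianRing.isUnit_of_mem_nonZeroDivisors ha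
  Ideal.IsMaximal.mem_associatedPrimes_of_isFractionRing A m

theorem AlgHom.exists_ne_zero_mul_eq_smul_of_isArtinianRing {K A : Type*} [Field K] [CommRing A]
    [Algebra K A] [IsArtinianRing A] (ψ : A →ₐ[K] K) :
    ∃ v : A, v ≠ 0 ∧ ∀ a : A, a * v = ψ a • v := by
  have : (RingHom.ker ψ).IsMaximal :=
    RingHom.ker_isMaximal_of_surjective ψ fun c ↦ ⟨algebraMap K A c, ψ.commutes c⟩
  obtain ⟨-, v, hv⟩ := isAssociatedPrime_iff.mp
    (Ideal.IsMaximal.mem_associatedPrimes_of_isArtinianRing (RingHom.ker ψ))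
  have hkill : ∀ a ∈ RingHom.ker ψ, a * v = 0 := by
    intro a ha
    rw [hv] at ha
    simpa using Submodule.mem_colon_singleton.mp ha
  refine ⟨v, ?_, fun a ↦ ?_⟩
  · rintro rfl
    have : (1 : A) ∈ RingHom.ker ψ := hv ▸ Submodule.mem_colon_singleton.mpr (by simp)
    simp at this
  · have : a - algebraMap K A (ψ a) ∈ RingHom.ker ψ := by simp
    rw [← sub_eq_zero, Algebra.smul_def, ← sub_mul]
    exact hkill _ this

theorem MvPolynomial.algHom_mul_eq_eval_smul {σ R A : Type*} [CommSemiring R] [CommSemiring A]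
    [Algebra R A] (f : MvPolynomial σ R →ₐ[R] A) {v : A} {lam : σ → R}
    (h : ∀ i, f (X i) * v = lam i • v) (p : MvPolynomial σ R) :
    f p * v = eval lam p • v := by
  induction p using MvPolynomial.induction_on with
  | C a => rw [eval_C, ← algebraMap_eq, f.commutes, Algebra.smul_def]
  | add p q hp hq => rw [map_add, add_mul, hp, hq, map_add, add_smul]
  | mul_X p i hp =>
    rw [map_mul, mul_assoc, h, mul_smul_comm, hp, smul_smul, eval_mul, eval_X, mul_comm]

open MvPolynomial in
/-- **Stickelberger's theorem** (eigenvector form).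
For a zero-dimensional ideal `I` of `ℂ[x₁,…,xₙ]`, a point `lam ∈ ℂⁿ` lies in
the zero locus `V(I)` iff there is a nonzero `v` in `R ⧸ I` which is a
simultaneous eigenvector of the companion endomorphisms
`Tᵢ = ` multiplication by the class of `Xᵢ`, with eigenvalues `lam i`. -/
theorem stickelberger_eigenvectors
    (n : ℕ) (I : Ideal (MvPolynomial (Fin n) ℂ))
    (hfd : FiniteDimensional ℂ (MvPolynomial (Fin n) ℂ ⧸ I))
    (lam : Fin n → ℂ) :
    (∀ g ∈ I, MvPolynomial.eval lam g = 0) ↔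
      ∃ v : MvPolynomial (Fin n) ℂ ⧸ I, v ≠ 0 ∧
        ∀ i : Fin n,
          LinearMap.mulLeft ℂ (Ideal.Quotient.mk I (MvPolynomial.X i)) v
            = lam i • v := by
  constructor
  · intro hvanish
    have : IsArtinianRing (MvPolynomial (Fin n) ℂ ⧸ I) := isArtinian_of_tower ℂ inferInstance
    have hvanish_aeval : ∀ g ∈ I, aeval lam g = 0 := by simpa only [coe_aeval_eq_eval]
    obtain ⟨v, hv, hmul⟩ :=
      (Ideal.Quotient.liftₐ I (aeval lam) hvanish_aeval).exists_ne_zero_mul_eq_smul_of_isArtinianRing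
    refine ⟨v, hv, fun i ↦ ?_⟩
    rw [LinearMap.mulLeft_apply, ← Ideal.Quotient.mkₐ_eq_mk ℂ, hmul, ← AlgHom.comp_apply,
      Ideal.Quotient.liftₐ_comp, aeval_X]
  · rintro ⟨v, hv, heigen⟩ g hg
    have hmul := algHom_mul_eq_eval_smul (Ideal.Quotient.mkₐ ℂ I) heigen g
    rw [Ideal.Quotient.mkₐ_eq_mk, Ideal.Quotient.eq_zero_iff_mem.mpr hg, zero_mul, eq_comm,
      smul_eq_zero] at hmul
    exact hmul.resolve_right hv
end

section
/- Let I be a zero-dimensional ideal of R = ℂ[x₁,…,xₙ] and fix i ∈ {1,…,n}. The set of eigenvalues of the companion endomorphism T_i (multiplication by the class of x_i on the finite-dimensional ℂ-vector space R/I) equals the set {z_i : z ∈ V(I)} of i-th coordinates of points of the zero locus V(I). -/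
/-!
On the finite-dimensional space `R ⧸ I`, `μ` is an eigenvalue of multiplication by `a` exactly
when `a - μ` is not a unit. A non-unit of `R ⧸ I` lies in a maximal ideal, which by the
Nullstellensatz is the ideal of a point `z ∈ V(I)`; it contains `xᵢ - μ` iff `zᵢ = μ`.
Conversely, evaluation at such a `z` is a character of `R ⧸ I` killing `xᵢ - μ`.
-/

open MvPolynomial

theorem spectrum_mulLeft {R A : Type*} [CommRing R] [Ring A] [Algebra R A] (a : A) :
    spectrum R (LinearMap.mulLeft R a) = spectrum R a := by
  ext r
  rw [spectrum.mem_iff, spectrum.mem_iff, ← Algebra.lmul_isUnit_iff (R := R) (A := A), map_sub,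
    AlgHom.commutes]
  rfl

namespace MvPolynomial

variable {σ K : Type*} [Field K] {I : Ideal (MvPolynomial σ K)}

theorem not_isUnit_quotient_mk_of_mem_zeroLocus {q : MvPolynomial σ K} {z : σ → K}
    (hz : z ∈ zeroLocus K I) (hq : aeval z q = 0) : ¬IsUnit (Ideal.Quotient.mk I q) := by
  let evalAt : MvPolynomial σ K ⧸ I →ₐ[K] K := Ideal.Quotient.liftₐ I (aeval z) hz
  have hzero : evalAt (Ideal.Quotient.mk I q) = 0 := hq
  exact fun hunit => not_isUnit_zero (hzero ▸ hunit.map evalAt)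

variable [IsAlgClosed K] [Finite σ]

theorem exists_mem_zeroLocus_of_not_isUnit_quotient_mk {q : MvPolynomial σ K}
    (hq : ¬IsUnit (Ideal.Quotient.mk I q)) : ∃ z ∈ zeroLocus K I, aeval z q = 0 := by
  obtain ⟨m, hm, hqm⟩ := exists_max_ideal_of_mem_nonunits hq
  have : (m.comap (Ideal.Quotient.mk I)).IsMaximal :=
    Ideal.comap_isMaximal_of_surjective _ Ideal.Quotient.mk_surjective
  obtain ⟨z, hz⟩ := isMaximal_iff_eq_vanishingIdeal_singleton.mp this
  have hIz : I ≤ vanishingIdeal K {z} := by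
    rw [← hz]
    intro g hg
    rw [Ideal.mem_comap, Ideal.Quotient.eq_zero_iff_mem.mpr hg]
    exact m.zero_mem
  refine ⟨z, le_zeroLocus_iff_le_vanishingIdeal.mpr hIz rfl, ?_⟩
  rw [← mem_vanishingIdeal_singleton_iff, ← hz]
  exact hqm

theorem isUnit_quotient_mk_iff {q : MvPolynomial σ K} :
    IsUnit (Ideal.Quotient.mk I q) ↔ ∀ z ∈ zeroLocus K I, aeval z q ≠ 0 := by
  refine ⟨fun hq z hz hqz => not_isUnit_quotient_mk_of_mem_zeroLocus hz hqz hq, fun h => ?_⟩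
  by_contra hq
  obtain ⟨z, hz, hqz⟩ := exists_mem_zeroLocus_of_not_isUnit_quotient_mk hq
  exact h z hz hqz

theorem mem_spectrum_quotient_mk_iff {p : MvPolynomial σ K} {μ : K} :
    μ ∈ spectrum K (Ideal.Quotient.mk I p) ↔ ∃ z ∈ zeroLocus K I, aeval z p = μ := by
  rw [spectrum.mem_iff, ← Ideal.Quotient.mkₐ_eq_mk K, ← AlgHom.commutes (Ideal.Quotient.mkₐ K I),
    ← map_sub, Ideal.Quotient.mkₐ_eq_mk, isUnit_quotient_mk_iff]
  push Not
  refine exists_congr fun z => and_congr_right fun _ => ?_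
  rw [map_sub, AlgHom.commutes, Algebra.algebraMap_self, RingHom.id_apply, sub_eq_zero, eq_comm]

end MvPolynomial

/-- For a zero-dimensional ideal `I` of `ℂ[x₁,…,xₙ]` and each `i`, the set of
eigenvalues of the companion endomorphism `Tᵢ` (multiplication by the class of
`Xᵢ` on `R ⧸ I`) equals the set of `i`-th coordinates of points of the zero
locus `V(I)`. -/
theorem companion_eigenvalues_eq_coordinates
    (n : ℕ) (I : Ideal (MvPolynomial (Fin n) ℂ))
    (hfd : FiniteDimensional ℂ (MvPolynomial (Fin n) ℂ ⧸ I))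
    (i : Fin n) (μ : ℂ) :
    Module.End.HasEigenvalue
        (LinearMap.mulLeft ℂ (Ideal.Quotient.mk I (MvPolynomial.X i))) μ ↔
      ∃ z : Fin n → ℂ,
        (∀ g ∈ I, MvPolynomial.eval z g = 0) ∧ z i = μ := by
  rw [Module.End.hasEigenvalue_iff_mem_spectrum, spectrum_mulLeft,
    mem_spectrum_quotient_mk_iff]
  simp only [mem_zeroLocus_iff, aeval_eq_eval, aeval_X]
end

section
/- Let I be a zero-dimensional radical ideal of R = ℂ[x₁,…,xₙ]. Then the zero locus V(I) is a finite set, and for every polynomial p ∈ R the sum of the evaluations of p over the points of V(I) equals the trace of the ℂ-linear endomorphism mul(p) of R/I given by multiplication by the class of p: ∑_{z ∈ V(I)} p(z) = Tr(mul(p)). In particular, applying this with p = any polynomial expression in x₁,…,xₙ, the sum of p over the roots of I equals Tr(p(T₁,…,Tₙ)) for the companion endomorphisms T_i. -/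
/-!
Evaluating at the points of `V(I)` gives a `k`-algebra map `R ⧸ I → (V(I) → k)`. By the
Nullstellensatz its kernel is `√I / I = 0`, and since the evaluation characters are linearly
independent, `#V(I) ≤ dim (R ⧸ I)`; so it is an isomorphism. Multiplication by `f` on `V(I) → k`
is diagonal in the standard basis, with trace `∑ f`.
-/

open MvPolynomial

theorem Algebra.trace_pi_self {R ι : Type*} [CommRing R] [Fintype ι] (f : ι → R) :
    Algebra.trace R (ι → R) f = ∑ i, f i := by
  classical
  rw [Algebra.trace_eq_matrix_trace (Pi.basisFun R ι), Matrix.trace]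
  refine Finset.sum_congr rfl fun i _ => ?_
  simp [Algebra.leftMulMatrix_apply]

namespace MvPolynomial

variable {σ k : Type*} [Field k] (I : Ideal (MvPolynomial σ k))

noncomputable def evalQuotient (x : zeroLocus k I) : MvPolynomial σ k ⧸ I →ₐ[k] k :=
  Ideal.Quotient.liftₐ I (aeval (x : σ → k)) x.2

@[simp]
theorem evalQuotient_mk (x : zeroLocus k I) (p : MvPolynomial σ k) :
    evalQuotient I x (Ideal.Quotient.mk I p) = eval (x : σ → k) p :=
  rfl

theorem evalQuotient_injective : Function.Injective (evalQuotient I) := by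
  intro x y hxy
  ext i
  simpa using congr($hxy (Ideal.Quotient.mk I (X i)))

theorem finite_zeroLocus [FiniteDimensional k (MvPolynomial σ k ⧸ I)] :
    (zeroLocus k I).Finite :=
  Set.finite_coe_iff.mp (Finite.of_injective _ (evalQuotient_injective I))

theorem card_zeroLocus_le_finrank [FiniteDimensional k (MvPolynomial σ k ⧸ I)] :
    Nat.card (zeroLocus k I) ≤ Module.finrank k (MvPolynomial σ k ⧸ I) :=
  (Nat.card_le_card_of_injective _ (evalQuotient_injective I)).trans
    (card_algHom_le_finrank k _ k)

noncomputable def evalZeroLocus : MvPolynomial σ k ⧸ I →ₐ[k] (zeroLocus k I → k) :=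
  AlgHom.pi (evalQuotient I)

theorem evalZeroLocus_injective [IsAlgClosed k] [Finite σ] (hI : I.IsRadical) :
    Function.Injective (evalZeroLocus I) := by
  rw [injective_iff_map_eq_zero]
  intro a ha
  obtain ⟨p, rfl⟩ := Ideal.Quotient.mk_surjective a
  have hp : p ∈ vanishingIdeal k (zeroLocus k I) := fun x hx => by
    simpa [evalZeroLocus] using congr_fun ha ⟨x, hx⟩
  rw [vanishingIdeal_zeroLocus_eq_radical, hI.radical] at hp
  exact Ideal.Quotient.eq_zero_iff_mem.mpr hp

theorem evalZeroLocus_bijective [IsAlgClosed k] [Finite σ]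
    [FiniteDimensional k (MvPolynomial σ k ⧸ I)] (hI : I.IsRadical) :
    Function.Bijective (evalZeroLocus I) := by
  have := (finite_zeroLocus I).fintype
  have hinj := evalZeroLocus_injective I hI
  have hrank : Module.finrank k (MvPolynomial σ k ⧸ I) =
      Module.finrank k (zeroLocus k I → k) := by
    refine le_antisymm (LinearMap.finrank_le_finrank_of_injective
      (f := (evalZeroLocus I).toLinearMap) hinj) ?_
    rw [Module.finrank_fintype_fun_eq_card, ← Nat.card_eq_fintype_card]
    exact card_zeroLocus_le_finrank I
  exact ⟨hinj, (LinearMap.injective_iff_surjective_of_finrank_eq_finrank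
    (f := (evalZeroLocus I).toLinearMap) hrank).mp hinj⟩

noncomputable def quotientEquivZeroLocusFun [IsAlgClosed k] [Finite σ]
    [FiniteDimensional k (MvPolynomial σ k ⧸ I)] (hI : I.IsRadical) :
    (MvPolynomial σ k ⧸ I) ≃ₐ[k] (zeroLocus k I → k) :=
  AlgEquiv.ofBijective (evalZeroLocus I) (evalZeroLocus_bijective I hI)

theorem trace_mk_eq_finsum_eval [IsAlgClosed k] [Finite σ]
    [FiniteDimensional k (MvPolynomial σ k ⧸ I)] (hI : I.IsRadical) (p : MvPolynomial σ k) :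
    Algebra.trace k (MvPolynomial σ k ⧸ I) (Ideal.Quotient.mk I p) =
      ∑ᶠ x ∈ zeroLocus k I, eval x p := by
  have := (finite_zeroLocus I).fintype
  rw [← Algebra.trace_eq_of_algEquiv (quotientEquivZeroLocusFun I hI), Algebra.trace_pi_self,
    ← finsum_set_coe_eq_finsum_mem, finsum_eq_sum_of_fintype]
  rfl

end MvPolynomial

/-- For a zero-dimensional radical ideal `I` of `ℂ[x₁,…,xₙ]`, the zero locus
`V(I)` is finite, and for every polynomial `p` the sum of the evaluations of
`p` over the points of `V(I)` equals the trace of the multiplication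
endomorphism `mul(p)` of `R ⧸ I`. -/
theorem sum_over_roots_eq_trace_mul
    (n : ℕ) (I : Ideal (MvPolynomial (Fin n) ℂ))
    (hfd : FiniteDimensional ℂ (MvPolynomial (Fin n) ℂ ⧸ I))
    (hrad : I.IsRadical) :
    {z : Fin n → ℂ | ∀ g ∈ I, MvPolynomial.eval z g = 0}.Finite ∧
      ∀ p : MvPolynomial (Fin n) ℂ,
        (∑ᶠ z ∈ {z : Fin n → ℂ | ∀ g ∈ I, MvPolynomial.eval z g = 0},
            MvPolynomial.eval z p)
          = LinearMap.trace ℂ (MvPolynomial (Fin n) ℂ ⧸ I)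
              (LinearMap.mulLeft ℂ (Ideal.Quotient.mk I p)) :=
  -- The set is `zeroLocus ℂ I` and the trace is `Algebra.trace`, both up to unfolding.
  ⟨finite_zeroLocus I, fun p => (trace_mk_eq_finsum_eval I hrad p).symm⟩
end

section
/- Let I be a zero-dimensional radical ideal of R = ℂ[x₁,…,xₙ], and let p, q ∈ R with q(z) ≠ 0 for every point z of the finite zero locus V(I). Then the sum of the rational function p/q over the roots of I equals the trace of the endomorphism mul(p) composed with the inverse of mul(q) on R/I: ∑_{z ∈ V(I)} p(z)/q(z) = Tr( mul(p) ∘ mul(q)⁻¹ ). -/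
/-!
Because `I` is radical and zero-dimensional, `A = R ⧸ I` is a reduced finite-dimensional
`ℂ`-algebra, so evaluation at its characters `A →ₐ[ℂ] ℂ` is an algebra isomorphism onto
`ℂ^{characters}`, and the characters are exactly the evaluations at the points of `V(I)`.
In these coordinates `mul(f)` is the diagonal matrix of the values `f(z)`, so `q` is a unit,
`mul(p) ∘ mul(q)⁻¹ = mul(p q⁻¹)`, and its trace is `∑ p(z) / q(z)`.
-/

open MvPolynomial
open scoped Ring

theorem map_ringInverse {F M N : Type*} [MonoidWithZero M] [MonoidWithZero N] [FunLike F M N]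
    [MonoidHomClass F M N] (f : F) {a : M} (ha : IsUnit a) : f a⁻¹ʳ = (f a)⁻¹ʳ := by
  rw [← mul_one (f a)⁻¹ʳ, ← map_one f, ← Ring.mul_inverse_cancel a ha, map_mul,
    Ring.inverse_mul_cancel_left _ _ (ha.map f)]

theorem Algebra.trace_fun_eq_sum {K ι : Type*} [CommRing K] [Fintype ι] (v : ι → K) :
    Algebra.trace K (ι → K) v = ∑ i, v i := by
  classical
  rw [Algebra.trace_eq_matrix_trace (Pi.basisFun K ι), Matrix.trace]
  simp [Algebra.leftMulMatrix_apply]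

section Characters

variable {K A : Type*} [Field K] [IsAlgClosed K] [CommRing A] [Algebra K A]

theorem exists_algHom_ker_eq_of_isMaximal [Algebra.IsIntegral K A] (m : Ideal A) [m.IsMaximal] :
    ∃ φ : A →ₐ[K] K, RingHom.ker φ = m := by
  let := Ideal.Quotient.field m
  let e : K ≃ₐ[K] A ⧸ m := AlgEquiv.ofBijective (Algebra.ofId K (A ⧸ m))
    IsAlgClosed.algebraMap_bijective_of_isIntegral
  refine ⟨e.symm.toAlgHom.comp (Ideal.Quotient.mkₐ K m), ?_⟩
  ext a
  simp [RingHom.mem_ker, Ideal.Quotient.eq_zero_iff_mem]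

theorem isUnit_of_forall_algHom_ne_zero [Algebra.IsIntegral K A] {a : A}
    (h : ∀ φ : A →ₐ[K] K, φ a ≠ 0) : IsUnit a := by
  by_contra ha
  obtain ⟨m, hm, ham⟩ := exists_max_ideal_of_mem_nonunits ha
  obtain ⟨φ, hφ⟩ := exists_algHom_ker_eq_of_isMaximal (K := K) m
  exact h φ (hφ ▸ ham : a ∈ RingHom.ker φ)

variable [Module.Finite K A] [IsReduced A]

theorem eq_zero_of_forall_algHom_eq_zero {a : A} (h : ∀ φ : A →ₐ[K] K, φ a = 0) :
    a = 0 := by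
  have : IsArtinianRing A := IsArtinianRing.of_finite K A
  have ha : a ∈ nilradical A := by
    rw [IsArtinianRing.nilradical_eq_iInf, Submodule.mem_iInf]
    intro m
    obtain ⟨φ, hφ⟩ := exists_algHom_ker_eq_of_isMaximal (K := K) m.asIdeal
    exact hφ ▸ h φ
  exact (mem_nilradical.mp ha).eq_zero

/-- Injectivity comes from `A` being reduced and Artinian; surjectivity from Dedekind's
independence of characters, which bounds their number by `finrank K A`. -/
noncomputable def equivPiAlgHom : A ≃ₐ[K] ((A →ₐ[K] K) → K) := by
  let ev : A →ₐ[K] ((A →ₐ[K] K) → K) := AlgHom.pi fun φ => φ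
  have := Fintype.ofFinite (A →ₐ[K] K)
  have hinj : Function.Injective ev := (injective_iff_map_eq_zero ev).mpr fun a ha =>
    eq_zero_of_forall_algHom_eq_zero fun φ => congrFun ha φ
  have hcard : Fintype.card (A →ₐ[K] K) ≤ Module.finrank K A := by
    simpa [Subspace.dual_finrank_eq] using
      (linearIndependent_algHom_toLinearMap K A K).fintype_card_le_finrank
  have hrank : Module.finrank K A = Module.finrank K ((A →ₐ[K] K) → K) := by
    rw [Module.finrank_fintype_fun_eq_card]
    exact le_antisymm
      (by simpa using LinearMap.finrank_le_finrank_of_injective (f := ev.toLinearMap) hinj) hcard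
  have hsurj : Function.Surjective ev :=
    (LinearMap.injective_iff_surjective_of_finrank_eq_finrank (f := ev.toLinearMap) hrank).mp hinj
  exact AlgEquiv.ofBijective ev ⟨hinj, hsurj⟩

theorem Algebra.trace_eq_sum_algHom_apply [Fintype (A →ₐ[K] K)] (a : A) :
    Algebra.trace K A a = ∑ φ : A →ₐ[K] K, φ a := by
  rw [← Algebra.trace_eq_of_algEquiv equivPiAlgHom a, Algebra.trace_fun_eq_sum]
  rfl

end Characters

section ZeroLocus

variable {σ K : Type*} [Field K] (I : Ideal (MvPolynomial σ K))

theorem algHom_quotient_mk_eq_aeval (φ : MvPolynomial σ K ⧸ I →ₐ[K] K)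
    (f : MvPolynomial σ K) :
    φ (Ideal.Quotient.mk I f) = aeval (fun i => φ (Ideal.Quotient.mk I (X i))) f :=
  DFunLike.congr_fun (aeval_unique (φ.comp (Ideal.Quotient.mkₐ K I))) f

noncomputable def quotientAlgHomEquivZeroLocus :
    (MvPolynomial σ K ⧸ I →ₐ[K] K) ≃ zeroLocus K I where
  toFun φ := ⟨fun i => φ (Ideal.Quotient.mk I (X i)), fun g hg => by
    rw [← algHom_quotient_mk_eq_aeval, Ideal.Quotient.eq_zero_iff_mem.mpr hg, map_zero]⟩
  invFun z := Ideal.Quotient.liftₐ I (aeval z.1) (mem_zeroLocus_iff.mp z.2)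
  left_inv φ := by
    apply Ideal.Quotient.algHom_ext K
    rw [Ideal.Quotient.liftₐ_comp]
    exact algHom_ext fun i => aeval_X _ i
  right_inv z := by
    ext i
    simp

theorem eval_quotientAlgHomEquivZeroLocus (φ : MvPolynomial σ K ⧸ I →ₐ[K] K)
    (f : MvPolynomial σ K) :
    eval (quotientAlgHomEquivZeroLocus I φ : σ → K) f = φ (Ideal.Quotient.mk I f) :=
  (algHom_quotient_mk_eq_aeval I φ f).symm

theorem finsum_mem_zeroLocus_eq_sum_algHom [Fintype (MvPolynomial σ K ⧸ I →ₐ[K] K)]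
    {M : Type*} [AddCommMonoid M] (f : (σ → K) → M) :
    ∑ᶠ z ∈ zeroLocus K I, f z = ∑ φ, f (quotientAlgHomEquivZeroLocus I φ) := by
  rw [← finsum_set_coe_eq_finsum_mem, ← finsum_comp_equiv (quotientAlgHomEquivZeroLocus I),
    finsum_eq_sum_of_fintype]

end ZeroLocus

/-- For a zero-dimensional radical ideal `I` of `ℂ[x₁,…,xₙ]` and polynomials
`p, q` with `q` nonvanishing on the zero locus `V(I)`, the sum of the rational
function `p/q` over the points of `V(I)` equals the trace of
`mul(p) ∘ mul(q)⁻¹` on `R ⧸ I`. -/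
theorem sum_rational_over_roots_eq_trace
    (n : ℕ) (I : Ideal (MvPolynomial (Fin n) ℂ))
    (hfd : FiniteDimensional ℂ (MvPolynomial (Fin n) ℂ ⧸ I))
    (hrad : I.IsRadical)
    (p q : MvPolynomial (Fin n) ℂ)
    (hq : ∀ z : Fin n → ℂ, (∀ g ∈ I, MvPolynomial.eval z g = 0) →
      MvPolynomial.eval z q ≠ 0) :
    (∑ᶠ z ∈ {z : Fin n → ℂ | ∀ g ∈ I, MvPolynomial.eval z g = 0},
        MvPolynomial.eval z p / MvPolynomial.eval z q)
      = LinearMap.trace ℂ (MvPolynomial (Fin n) ℂ ⧸ I)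
          ((LinearMap.mulLeft ℂ (Ideal.Quotient.mk I p) :
              Module.End ℂ (MvPolynomial (Fin n) ℂ ⧸ I)) *
            Ring.inverse
              (LinearMap.mulLeft ℂ (Ideal.Quotient.mk I q) :
                Module.End ℂ (MvPolynomial (Fin n) ℂ ⧸ I))) := by
  have : IsReduced (MvPolynomial (Fin n) ℂ ⧸ I) :=
    (Ideal.isRadical_iff_quotient_reduced I).mp hrad
  have := Fintype.ofFinite (MvPolynomial (Fin n) ℂ ⧸ I →ₐ[ℂ] ℂ)
  have hV : {z : Fin n → ℂ | ∀ g ∈ I, eval z g = 0} = zeroLocus ℂ I := rfl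
  have hunit : IsUnit (Ideal.Quotient.mk I q) := isUnit_of_forall_algHom_ne_zero fun φ => by
    rw [← eval_quotientAlgHomEquivZeroLocus]
    exact hq _ (quotientAlgHomEquivZeroLocus I φ).2
  calc _ = ∑ φ : MvPolynomial (Fin n) ℂ ⧸ I →ₐ[ℂ] ℂ,
        φ (Ideal.Quotient.mk I p * Ring.inverse (Ideal.Quotient.mk I q)) := by
        simp only [hV, finsum_mem_zeroLocus_eq_sum_algHom, eval_quotientAlgHomEquivZeroLocus,
          map_mul, map_ringInverse _ hunit, Ring.inverse_eq_inv, div_eq_mul_inv]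
    _ = Algebra.trace ℂ _ (Ideal.Quotient.mk I p * Ring.inverse (Ideal.Quotient.mk I q)) :=
        (Algebra.trace_eq_sum_algHom_apply _).symm
    _ = _ := by
        rw [Algebra.trace_apply, map_mul, map_ringInverse (Algebra.lmul ℂ _) hunit]
        rfl
end

section
/- Let I be a zero-dimensional radical ideal of R = ℂ[x₁,…,xₙ]. Then the companion endomorphisms T₁,…,Tₙ of R/I are simultaneously diagonalizable: there exists a basis of the finite-dimensional ℂ-vector space R/I consisting of vectors that are eigenvectors of every T_i. -/
/-!
A reduced finite-dimensional commutative algebra over an algebraically closed field `k` is Artinian,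
hence the product of its residue fields at the finitely many maximal ideals, each of which is `k`.
So it is isomorphic to `kᵐ`, where multiplication by any element is diagonal in the standard basis.
-/

section

variable {k A ι : Type*} [CommSemiring k] [Semiring A] [Algebra k A] [DecidableEq ι]

theorem AlgEquiv.mul_symm_single_one (e : A ≃ₐ[k] (ι → k)) (a : A) (j : ι) :
    a * e.symm (Pi.single j 1) = e a j • e.symm (Pi.single j 1) := by
  have h : e a * Pi.single j 1 = e a j • Pi.single j (1 : k) := by
    rw [← Pi.single_mul_right, mul_one, ← Pi.single_smul, smul_eq_mul, mul_one]
  apply e.injective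
  rw [map_mul, map_smul, e.apply_symm_apply, h]

end

section

variable (k A : Type*) [Field k] [IsAlgClosed k] [CommRing A] [Algebra k A]
  [FiniteDimensional k A] [IsReduced A]

noncomputable def algEquivPiMaximalSpectrum :
    A ≃ₐ[k] (MaximalSpectrum A → k) :=
  have := IsArtinianRing.of_finite k A
  letI := IsArtinianRing.fieldOfSubtypeIsMaximal (R := A)
  ((IsArtinianRing.equivPi A).restrictScalars k).trans <| .piCongrRight fun _ ↦
    (AlgEquiv.ofBijective (Algebra.ofId k _) IsAlgClosed.algebraMap_bijective_of_isIntegral).symm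

variable {k A}

theorem exists_basis_forall_mul_eq_smul :
    ∃ b : Module.Basis (MaximalSpectrum A) k A, ∀ a j, ∃ μ : k, a * b j = μ • b j := by
  classical
  have := IsArtinianRing.of_finite k A
  let e := algEquivPiMaximalSpectrum k A
  exact ⟨(Pi.basisFun k _).map e.symm.toLinearEquiv, fun a j ↦
    ⟨e a j, by simpa using e.mul_symm_single_one a j⟩⟩

end

/-- For a zero-dimensional radical ideal `I` of `ℂ[x₁,…,xₙ]`, the companion
endomorphisms `T₁,…,Tₙ` of `R ⧸ I` are simultaneously diagonalizable: there
is a basis of `R ⧸ I` consisting of simultaneous eigenvectors of all the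
`Tᵢ`. -/
theorem companion_simultaneously_diagonalizable
    (n : ℕ) (I : Ideal (MvPolynomial (Fin n) ℂ))
    (hfd : FiniteDimensional ℂ (MvPolynomial (Fin n) ℂ ⧸ I))
    (hrad : I.IsRadical) :
    ∃ (ι : Type) (b : Module.Basis ι ℂ (MvPolynomial (Fin n) ℂ ⧸ I)),
      ∀ (j : ι) (i : Fin n), ∃ μ : ℂ,
        LinearMap.mulLeft ℂ (Ideal.Quotient.mk I (MvPolynomial.X i)) (b j)
          = μ • b j := by
  have := (Ideal.isRadical_iff_quotient_reduced I).mp hrad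
  obtain ⟨b, hb⟩ := exists_basis_forall_mul_eq_smul (k := ℂ) (A := MvPolynomial (Fin n) ℂ ⧸ I)
  exact ⟨_, b, fun j i ↦ hb _ j⟩
end

section
/- Let n ≥ 1, let z₁,…,zₙ be pairwise distinct complex numbers, and let (s_{ab}) be complex numbers for 1 ≤ a,b ≤ n satisfying s_{ab} = s_{ba}, s_{aa} = 0, and ∑_{b=1}^{n} s_{ab} = 0 for every a. Define ℰ_a = ∑_{b ≠ a} s_{ab}/(z_a − z_b). Then the three relations hold: ∑_{a=1}^{n} ℰ_a = 0, ∑_{a=1}^{n} z_a ℰ_a = 0, and ∑_{a=1}^{n} z_a² ℰ_a = 0. -/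
/-!
Pairing the term `(a, b)` of `∑ₐ φ(zₐ) ℰₐ` with the term `(b, a)` and using `s_ab = s_ba`
gives
`2 ∑ₐ φ(zₐ) ℰₐ = ∑_{a ≠ b} s_ab (φ(zₐ) − φ(z_b)) / (zₐ − z_b)`.
For `φ = 1, z, z²` the difference quotient is `0`, `1`, `zₐ + z_b`, and the resulting sums
vanish by the row-sum conditions.
-/

open Finset

section
variable {ι : Type*} [Fintype ι] [DecidableEq ι]

lemma sum_sum_erase_comm {M : Type*} [AddCommMonoid M] (F : ι → ι → M) :
    ∑ a, ∑ b ∈ univ.erase a, F a b = ∑ a, ∑ b ∈ univ.erase a, F b a := by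
  rw [sum_comm' (t' := univ) (s' := fun b => univ.erase b)]
  simp [ne_comm]

lemma sum_erase_eq_zero_of_sum_eq_zero {G : Type*} [AddCommGroup G] {s : ι → ι → G}
    (hdiag : ∀ a, s a a = 0) (hrow : ∀ a, ∑ b, s a b = 0) (a : ι) :
    ∑ b ∈ univ.erase a, s a b = 0 := by
  rw [sum_erase_eq_sub (mem_univ a), hrow, hdiag, sub_zero]

lemma sum_sum_erase_mul_add_eq_zero {R : Type*} [CommRing R] {s : ι → ι → R}
    (hsymm : ∀ a b, s a b = s b a) (hdiag : ∀ a, s a a = 0) (hrow : ∀ a, ∑ b, s a b = 0)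
    (w : ι → R) :
    ∑ a, ∑ b ∈ univ.erase a, s a b * (w a + w b) = 0 := by
  simp only [mul_add, sum_add_distrib]
  rw [sum_sum_erase_comm fun a b => s a b * w b]
  simp only [hsymm _ (_ : ι), ← sum_mul, sum_erase_eq_zero_of_sum_eq_zero hdiag hrow, zero_mul,
    sum_const_zero, add_zero]

variable {K : Type*} [Field K]

def scatteringEq (z : ι → K) (s : ι → ι → K) (a : ι) : K :=
  ∑ b ∈ univ.erase a, s a b / (z a - z b)

lemma two_mul_sum_mul_scatteringEq (z : ι → K) {s : ι → ι → K}
    (hsymm : ∀ a b, s a b = s b a) (φ : K → K) :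
    2 * ∑ a, φ (z a) * scatteringEq z s a
      = ∑ a, ∑ b ∈ univ.erase a, s a b * ((φ (z a) - φ (z b)) / (z a - z b)) := by
  rw [two_mul]
  simp only [scatteringEq, mul_sum]
  nth_rewrite 2 [sum_sum_erase_comm]
  simp only [← sum_add_distrib]
  refine sum_congr rfl fun a _ => sum_congr rfl fun b _ => ?_
  rw [hsymm b a, ← neg_sub (z a) (z b), div_neg]
  ring

end

theorem scattering_equations_relations_general
    (n : ℕ)
    (z : Fin n → ℂ) (hz : Function.Injective z)
    (s : Fin n → Fin n → ℂ)
    (hsymm : ∀ a b, s a b = s b a)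
    (hdiag : ∀ a, s a a = 0)
    (hrow : ∀ a, ∑ b, s a b = 0)
    (E : Fin n → ℂ)
    (hE : ∀ a, E a = ∑ b ∈ Finset.univ.erase a, s a b / (z a - z b)) :
    (∑ a, E a = 0) ∧ (∑ a, z a * E a = 0) ∧ (∑ a, (z a) ^ 2 * E a = 0) := by
  obtain rfl : E = scatteringEq z s := funext hE
  have hzne : ∀ a, ∀ b ∈ univ.erase a, z a - z b ≠ 0 := fun a b hb =>
    sub_ne_zero.2 (hz.ne (ne_of_mem_erase hb).symm)
  refine ⟨?_, ?_, ?_⟩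
  · simpa using two_mul_sum_mul_scatteringEq z hsymm fun _ => 1
  · have h := two_mul_sum_mul_scatteringEq z hsymm id
    rw [sum_congr rfl fun a _ => sum_congr rfl fun b hb => by
      rw [id, id, div_self (hzne a b hb), mul_one]] at h
    simpa [sum_erase_eq_zero_of_sum_eq_zero hdiag hrow] using h
  · have h := two_mul_sum_mul_scatteringEq z hsymm (· ^ 2)
    rw [sum_congr rfl fun a _ => sum_congr rfl fun b hb => by
      rw [sq_sub_sq, mul_div_assoc, div_self (hzne a b hb), mul_one],
      sum_sum_erase_mul_add_eq_zero hsymm hdiag hrow] at h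
    simpa using h

/-- The three `SL(2,ℂ)` relations among the scattering equations: with
pairwise distinct `z_a` and Mandelstam data `s_ab` satisfying symmetry,
vanishing diagonal and vanishing row sums, the functions
`ℰ_a = ∑_{b ≠ a} s_ab / (z_a − z_b)` satisfy
`∑ ℰ_a = 0`, `∑ z_a ℰ_a = 0` and `∑ z_a² ℰ_a = 0`. -/
theorem scattering_equations_relations
    (n : ℕ) (hn : 1 ≤ n)
    (z : Fin n → ℂ) (hz : Function.Injective z)
    (s : Fin n → Fin n → ℂ)
    (hsymm : ∀ a b, s a b = s b a)
    (hdiag : ∀ a, s a a = 0)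
    (hrow : ∀ a, ∑ b, s a b = 0)
    (E : Fin n → ℂ)
    (hE : ∀ a, E a = ∑ b ∈ Finset.univ.erase a, s a b / (z a - z b)) :
    (∑ a, E a = 0) ∧ (∑ a, z a * E a = 0) ∧ (∑ a, (z a) ^ 2 * E a = 0) :=
  scattering_equations_relations_general n z hz s hsymm hdiag hrow E hE
end

section
/- Let s₁₂, s₁₃, s₁₄, s₂₅, s₃₅, s₄₅ be complex numbers with s₁₃ ≠ 0, s₁₄ ≠ 0, s₂₅ ≠ 0, and let δ be a complex number with δ² = (s₁₂ s₂₅ + s₁₃ s₃₅ − s₁₄ s₄₅)² − 4 s₁₂ s₁₃ s₂₅ s₃₅. Define z₃ = (−s₁₂ s₂₅ − s₁₃ s₃₅ + s₁₄ s₄₅ − δ)/(2 s₁₃ s₂₅) and z₄ = (−s₁₂ s₂₅ + s₁₃ s₃₅ − s₁₄ s₄₅ + δ)/(2 s₁₄ s₂₅). Then (z₃, z₄) satisfies both gauge-fixed 5-point scattering equations: s₁₂ + s₁₃ z₃ + s₁₄ z₄ = 0 and s₄₅ z₃ + s₃₅ z₄ + s₂₅ z₃ z₄ = 0. (Since δ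 may be replaced by −δ, this gives both solutions of the system.) -/
/-- The explicit pair `(z₃, z₄)` built from a square root `δ` of the
discriminant solves both gauge-fixed 5-point scattering equations
`s₁₂ + s₁₃z₃ + s₁₄z₄ = 0` and `s₄₅z₃ + s₃₅z₄ + s₂₅z₃z₄ = 0`. -/
theorem five_point_scattering_solutions
    (s₁₂ s₁₃ s₁₄ s₂₅ s₃₅ s₄₅ δ : ℂ)
    (h13 : s₁₃ ≠ 0) (h14 : s₁₄ ≠ 0) (h25 : s₂₅ ≠ 0)
    (hδ : δ ^ 2 = (s₁₂ * s₂₅ + s₁₃ * s₃₅ - s₁₄ * s₄₅) ^ 2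
        - 4 * s₁₂ * s₁₃ * s₂₅ * s₃₅)
    (z₃ z₄ : ℂ)
    (hz₃ : z₃ = (-(s₁₂ * s₂₅) - s₁₃ * s₃₅ + s₁₄ * s₄₅ - δ) / (2 * s₁₃ * s₂₅))
    (hz₄ : z₄ = (-(s₁₂ * s₂₅) + s₁₃ * s₃₅ - s₁₄ * s₄₅ + δ) / (2 * s₁₄ * s₂₅)) :
    s₁₂ + s₁₃ * z₃ + s₁₄ * z₄ = 0 ∧
      s₄₅ * z₃ + s₃₅ * z₄ + s₂₅ * z₃ * z₄ = 0 := by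
  subst hz₃ hz₄
  constructor <;> field_simp <;> try ring <;> linear_combination -s₂₅ * hδ
  linear_combination -hδ
end

section
/- Let s₁₂, s₁₃, s₁₄, s₂₅, s₃₅, s₄₅ be complex numbers with s₁₃ ≠ 0, s₁₄ ≠ 0, s₂₅ ≠ 0, and define the 2×2 complex matrices T₃ = [[−s₁₂/s₁₃, −s₁₄/s₁₃], [s₁₂s₄₅/(s₁₃s₂₅), (s₁₄s₄₅ − s₁₃s₃₅)/(s₁₃s₂₅)]] and T₄ = [[0, 1], [−s₁₂s₄₅/(s₁₄s₂₅), (s₁₃s₃₅ − s₁₄s₄₅ − s₁₂s₂₅)/(s₁₄s₂₅)]]. Then: (i) T₃ and T₄ commute, T₃T₄ = T₄T₃; (ii) they satisfy the first scattering polynomial, s₁₂·𝟙 + s₁₃ T₃ + s₁₄ T₄ = 0 (the 2×2 zero matrix); and (iii) they satisfy the second scattering polynomial, s₄₅ T₃ + s₃₅ T₄ + s₂₅ T₃T₄ = 0. -/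
/-!
The first scattering polynomial is linear in `z₃`, so `T₃ = -(s₁₂ • 𝟙 + s₁₄ • T₄) / s₁₃` is a
polynomial in `T₄` and therefore commutes with it. Substituting this into the second polynomial
leaves the quadratic `s₁₄s₂₅ z₄² + (s₁₂s₂₅ + s₁₄s₄₅ - s₁₃s₃₅) z₄ + s₁₂s₄₅` in `z₄` alone, and `T₄` is
its companion matrix, so the identity (iii) is Cayley–Hamilton for `T₄`.
-/

theorem companion_fin_two_cayley_hamilton {R : Type*} [CommRing R] {c d : R}
    {M : Matrix (Fin 2) (Fin 2) R} (hM : M = !![0, 1; c, d]) :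
    M * M - d • M - c • (1 : Matrix (Fin 2) (Fin 2) R) = 0 := by
  subst hM
  ext i j
  fin_cases i <;> fin_cases j <;> simp [Matrix.one_fin_two]

/-- The 5-point companion matrices `T₃`, `T₄` commute and satisfy the two
gauge-fixed scattering polynomials:
`s₁₂·𝟙 + s₁₃T₃ + s₁₄T₄ = 0` and `s₄₅T₃ + s₃₅T₄ + s₂₅T₃T₄ = 0`. -/
theorem five_point_companion_matrices
    (s₁₂ s₁₃ s₁₄ s₂₅ s₃₅ s₄₅ : ℂ)
    (h13 : s₁₃ ≠ 0) (h14 : s₁₄ ≠ 0) (h25 : s₂₅ ≠ 0)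
    (T₃ T₄ : Matrix (Fin 2) (Fin 2) ℂ)
    (hT₃ : T₃ = !![-(s₁₂ / s₁₃), -(s₁₄ / s₁₃);
        s₁₂ * s₄₅ / (s₁₃ * s₂₅), (s₁₄ * s₄₅ - s₁₃ * s₃₅) / (s₁₃ * s₂₅)])
    (hT₄ : T₄ = !![0, 1;
        -(s₁₂ * s₄₅ / (s₁₄ * s₂₅)),
          (s₁₃ * s₃₅ - s₁₄ * s₄₅ - s₁₂ * s₂₅) / (s₁₄ * s₂₅)]) :
    T₃ * T₄ = T₄ * T₃ ∧
      s₁₂ • (1 : Matrix (Fin 2) (Fin 2) ℂ) + s₁₃ • T₃ + s₁₄ • T₄ = 0 ∧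
      s₄₅ • T₃ + s₃₅ • T₄ + s₂₅ • (T₃ * T₄) = 0 := by
  have hT₃_poly : T₃ = -(s₁₂ / s₁₃) • 1 - (s₁₄ / s₁₃) • T₄ := by
    subst hT₃ hT₄
    ext i j
    fin_cases i <;> fin_cases j <;> simp [Matrix.one_fin_two] <;> field_simp; ring
  have hT₄_quadratic := companion_fin_two_cayley_hamilton hT₄
  rw [hT₃_poly]
  simp only [sub_mul, smul_mul_assoc, one_mul]
  refine ⟨?_, ?_, ?_⟩
  · simp only [mul_sub, mul_smul_comm, mul_one]
  · match_scalars <;> field_simp <;> ring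
  · linear_combination (norm := skip) (-(s₁₄ * s₂₅ / s₁₃)) • hT₄_quadratic
    match_scalars <;> field_simp <;> ring
end
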